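/- Let u : ℂ → ℝ be a measurable function, integrable on every closed disk, satisfying for every z ∈ ℂ and r > 0 the pointwise sub-mean inequality max(u(z),0) ≤ (1/(π r²)) ∫_{|z'-z| ≤ r} max(u(z'),0) dλ(z'). Let E ⊆ ℂ be a measurable set, and assume u(z) ≤ 0 for all z ∈ ℂ \ E. Then for every r > 0: B_{u⁺}^{rad}(r) ≤ 4 · B_{u⁺}^{rad}(2r) · λ(E ∩ {|z| ≤ r}) / (π r²), where u⁺(z) := max(u(z), 0) and B_{u⁺}^{rad}(r) := (1/(π r²)) ∫_{|z'| ≤ r} u⁺(z') dλ(z'). -/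

import Mathlib

open MeasureTheory Metric

/-!
Every point `z` of the disk of radius `r` about `0` has its disk of radius `r` inside the disk of
radius `2r`, so the sub-mean inequality bounds `u⁺` on the small disk by `(2r)²/r² = 4` times the
mean of `u⁺` over the large disk. Since `u⁺` vanishes off `E`, integrating this bound over the
small disk only costs the area of `E` inside it.
-/

section

variable {X : Type*} [MeasurableSpace X] {μ : Measure X} {f : X → ℝ}

theorem le_mul_setIntegral_closedBall_two_mul [PseudoMetricSpace X] (hf : 0 ≤ f) {c r : ℝ}
    (hc : 0 ≤ c) {x : X} (hfi : IntegrableOn f (closedBall x (2 * r)) μ)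
    (hsub : ∀ z ∈ closedBall x r, f z ≤ c * ∫ y in closedBall z r, f y ∂μ) :
    ∀ z ∈ closedBall x r, f z ≤ c * ∫ y in closedBall x (2 * r), f y ∂μ := by
  intro z hz
  have hball : closedBall z r ⊆ closedBall x (2 * r) :=
    closedBall_subset_closedBall' (by rw [mem_closedBall] at hz; linarith)
  calc f z ≤ c * ∫ y in closedBall z r, f y ∂μ := hsub z hz
    _ ≤ c * ∫ y in closedBall x (2 * r), f y ∂μ :=
      mul_le_mul_of_nonneg_left (setIntegral_mono_set hfi (.of_forall hf) hball.eventuallyLE) hc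

theorem setIntegral_le_mul_measureReal_inter {s t : Set X} (hs : MeasurableSet s) (hμs : μ s < ⊤)
    (hf : 0 ≤ f) (hft : ∀ x ∉ t, f x = 0) {C : ℝ} (hC : ∀ x ∈ s, f x ≤ C) :
    ∫ x in s, f x ∂μ ≤ C * μ.real (t ∩ s) := by
  rw [setIntegral_eq_of_subset_of_forall_sdiff_eq_zero hs Set.inter_subset_right
    fun x hx => hft x fun hxt => hx.2 ⟨hxt, hx.1⟩]
  refine (Real.le_norm_self _).trans (norm_setIntegral_le_of_norm_le_const
    ((measure_mono Set.inter_subset_right).trans_lt hμs) fun x hx => ?_)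
  rw [Real.norm_of_nonneg (hf x)]
  exact hC x hx.2

end

theorem radialMean_posPart_le_of_nonpos_off_exceptional_general
    (u : ℂ → ℝ)
    (hint : ∀ (z : ℂ) (r : ℝ), IntegrableOn u (closedBall z r) volume)
    (hsub : ∀ (z : ℂ) (r : ℝ), 0 < r →
      max (u z) 0 ≤ (1 / (Real.pi * r ^ 2)) * ∫ z' in closedBall z r, max (u z') 0)
    (E : Set ℂ)
    (hneg : ∀ z ∉ E, u z ≤ 0) :
    ∀ r : ℝ, 0 < r →
      (1 / (Real.pi * r ^ 2)) * ∫ z' in closedBall (0 : ℂ) r, max (u z') 0 ≤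
        4 * ((1 / (Real.pi * (2 * r) ^ 2)) *
            ∫ z' in closedBall (0 : ℂ) (2 * r), max (u z') 0) *
          ((volume (E ∩ closedBall (0 : ℂ) r)).toReal / (Real.pi * r ^ 2)) := by
  intro r hr
  have hpos : (0 : ℂ → ℝ) ≤ fun z => max (u z) 0 := fun z => le_max_right _ _
  have hbound := le_mul_setIntegral_closedBall_two_mul (x := (0 : ℂ)) hpos (by positivity)
    (hint 0 (2 * r)).pos_part (fun z _ => hsub z r hr)
  have hloc := setIntegral_le_mul_measureReal_inter (μ := volume) measurableSet_closedBall
    measure_closedBall_lt_top hpos (t := E) (fun z hz => max_eq_right (hneg z hz)) hbound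
  calc (1 / (Real.pi * r ^ 2)) * ∫ z' in closedBall (0 : ℂ) r, max (u z') 0
      ≤ (1 / (Real.pi * r ^ 2)) * ((1 / (Real.pi * r ^ 2)) *
          (∫ z' in closedBall (0 : ℂ) (2 * r), max (u z') 0) *
          volume.real (E ∩ closedBall (0 : ℂ) r)) := by gcongr
    _ = _ := by rw [measureReal_def]; field_simp; ring

/-- If `u⁺ = max(u, ·0)` satisfies the pointwise sub-mean inequality over closed disks and
`u ≤ 0` off a measurable set `E`, then for every `r > 0` the radial mean of `u⁺` satisfies
`B_{u⁺}^{rad}(r) ≤ 4 · B_{u⁺}^{rad}(2r) · λ(E ∩ closedBall 0 r) / (π r²)`. -/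
theorem radialMean_posPart_le_of_nonpos_off_exceptional
    (u : ℂ → ℝ) (hu : Measurable u)
    (hint : ∀ (z : ℂ) (r : ℝ), IntegrableOn u (closedBall z r) volume)
    (hsub : ∀ (z : ℂ) (r : ℝ), 0 < r →
      max (u z) 0 ≤ (1 / (Real.pi * r ^ 2)) * ∫ z' in closedBall z r, max (u z') 0)
    (E : Set ℂ) (hE : MeasurableSet E)
    (hneg : ∀ z ∉ E, u z ≤ 0) :
    ∀ r : ℝ, 0 < r →
      (1 / (Real.pi * r ^ 2)) * ∫ z' in closedBall (0 : ℂ) r, max (u z') 0 ≤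
        4 * ((1 / (Real.pi * (2 * r) ^ 2)) *
            ∫ z' in closedBall (0 : ℂ) (2 * r), max (u z') 0) *
          ((volume (E ∩ closedBall (0 : ℂ) r)).toReal / (Real.pi * r ^ 2)) :=
  radialMean_posPart_le_of_nonpos_off_exceptional_general u hint hsub E hneg
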